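/- Let p > 3 be a prime and F a finite field of characteristic p over which the polynomial m(x) = x^{2p} − x^{2p−1} + 2x^{p+1} + 3^{−1}x^3 + 1 splits completely, with roots α_1,…,α_{2p}. Assume gcd(m'(x), x^4 − (3 − 3^{−1})x^3 + 1) = 1 in F_p[x]. Then the roots α_1,…,α_{2p} are pairwise distinct, α_i^{p−1} + α_i ≠ 0 for all i, and, setting v_i := (α_i^{p−1} + α_i)^{−1}, α := (α_1,…,α_{2p}) and v := (v_1,…,v_{2p}), the TGRS code C_p(α,v,−2) (with twist coefficient η = −2) is a self-dual code of length 2p over F. -/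

import Mathlib

/-!
In characteristic `p` one has `m' = (x^{p-1} + x)²`, and at a root `β` of `m` with
`β^{p-1} + β = 0` the relations `β^p = -β²`, `β^{2p} = β⁴`, `β^{2p-1} = β³` turn `m(β)` into
`β⁴ - (3 - 3⁻¹)β³ + 1`; the coprimality hypothesis therefore gives `β^{p-1} + β ≠ 0`.
Hence `m'(α_i) = (α_i^{p-1} + α_i)² ≠ 0`: the roots are simple and `v_i² = 1 / m'(α_i)`
are the Lagrange nodal weights of the `α_i`. By Lagrange interpolation
`L(h) = Σ v_i² h(α_i)` is the coefficient of `x^{2p-1}` when `deg h < 2p`, and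
`L(x^{2p}) = 1` because `L(m) = 0`. A twisted polynomial is `A + a x^{p-1}(1 + ηx)` with
`deg A < p - 1`, so for two of them `L(f g) = a b η (2 + η L(x^{2p}))`, which vanishes at
`η = -2`. The code is thus self-orthogonal, and as it has dimension `p = n / 2` it is self-dual.
-/

open Finset Polynomial

noncomputable section

/-- The twisted generalized Reed–Solomon (TGRS) code of length `n` and dimension `k`,
with evaluation points `α`, multipliers `v`, hook `k-1`, twist `1` and twist
coefficient `η`:  the set of words `(v i * f (α i))_i` where
`f(x) = Σ_{j<k} a_j x^j + η a_{k-1} x^k`. -/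
def TGRSCode (F : Type*) [Field F] (n k : ℕ) (α v : Fin n → F) (η : F) :
    Set (Fin n → F) :=
  {c | ∃ a : ℕ → F, c = fun i =>
    v i * ((∑ j ∈ Finset.range k, a j * α i ^ j) + η * a (k - 1) * α i ^ k)}

/-- The dual of a code `C ⊆ F^n` under the standard inner product. -/
def dualCode {F : Type*} [Field F] {n : ℕ} (C : Set (Fin n → F)) :
    Set (Fin n → F) :=
  {x | ∀ c ∈ C, ∑ i, x i * c i = 0}

/-- A code is self-dual if it coincides with its dual. -/
def IsSelfDual {F : Type*} [Field F] {n : ℕ} (C : Set (Fin n → F)) : Prop :=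
  C = dualCode C

/-- The Hamming weight of a word. -/
def hwt {F : Type*} [Field F] {n : ℕ} (c : Fin n → F) : ℕ :=
  {i | c i ≠ 0}.ncard

/-- `C` has minimum (Hamming) distance exactly `d`. -/
def IsMinDist {F : Type*} [Field F] {n : ℕ} (C : Set (Fin n → F)) (d : ℕ) : Prop :=
  (∃ c ∈ C, c ≠ 0 ∧ hwt c = d) ∧ ∀ c ∈ C, c ≠ 0 → d ≤ hwt c

section

open Module

variable {F : Type*} [Field F]

theorem isSelfDual_of_forall_sum_mul_eq_zero {n : ℕ} (W : Submodule F (Fin n → F))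
    (hW : ∀ x ∈ W, ∀ y ∈ W, ∑ i, x i * y i = 0) (hn : n ≤ 2 * finrank F W) :
    IsSelfDual (W : Set (Fin n → F)) := by
  set D := W.dualAnnihilator.comap (dotProductEquiv F (Fin n)).toLinearMap with hD_def
  have hD : dualCode (W : Set (Fin n → F)) = D := by
    ext x
    simp [D, dualCode, Submodule.mem_dualAnnihilator, dotProduct]
  have hfinrank : finrank F W + finrank F D = n := by
    rw [hD_def, Submodule.comap_equiv_eq_map_symm, LinearEquiv.finrank_map_eq,
      Subspace.finrank_add_finrank_dualAnnihilator_eq, finrank_fin_fun]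
  have hWD : W ≤ D := fun x hx => by
    rw [← SetLike.mem_coe, ← hD]
    exact fun y hy => hW x hx y hy
  rw [IsSelfDual, hD]
  exact congrArg SetLike.coe (Submodule.eq_of_le_of_finrank_le hWD (by omega))

def twistedPoly (k : ℕ) (η : F) : (ℕ → F) →ₗ[F] F[X] where
  toFun a := ∑ j ∈ range k, C (a j) * X ^ j + C (η * a (k - 1)) * X ^ k
  map_add' a b := by
    simp only [Pi.add_apply, map_add, add_mul, mul_add, sum_add_distrib]
    ring
  map_smul' c a := by
    simp only [Pi.smul_apply, smul_eq_mul, map_mul, RingHom.id_apply, smul_add, Finset.smul_sum,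
      smul_eq_C_mul, mul_assoc, mul_left_comm (C η)]

theorem eval_twistedPoly (k : ℕ) (η : F) (a : ℕ → F) (x : F) :
    (twistedPoly k η a).eval x = ∑ j ∈ range k, a j * x ^ j + η * a (k - 1) * x ^ k := by
  simp [twistedPoly, eval_finsetSum]

theorem coeff_twistedPoly_of_lt {k j : ℕ} (hj : j < k) (η : F) (a : ℕ → F) :
    (twistedPoly k η a).coeff j = a j := by
  simp [twistedPoly, finsetSum_coeff, coeff_X_pow, -map_mul, hj, hj.ne]

theorem natDegree_twistedPoly_le (k : ℕ) (η : F) (a : ℕ → F) :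
    (twistedPoly k η a).natDegree ≤ k := by
  refine natDegree_add_le_of_degree_le (natDegree_sum_le_of_forall_le _ _ fun j hj => ?_)
    (natDegree_C_mul_X_pow_le _ _)
  exact (natDegree_C_mul_X_pow_le _ _).trans (mem_range.1 hj).le

theorem twistedPoly_succ (m : ℕ) (η : F) (a : ℕ → F) :
    twistedPoly (m + 1) η a =
      ∑ j ∈ range m, C (a j) * X ^ j + C (a m) * (X ^ m * (1 + C η * X)) := by
  simp only [twistedPoly, LinearMap.coe_mk, AddHom.coe_mk, sum_range_succ, Nat.add_sub_cancel,
    map_mul]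
  ring

variable {ι : Type*}

def weightedEval (v w : ι → F) : F[X] →ₗ[F] (ι → F) :=
  LinearMap.pi fun i => v i • leval (w i)

@[simp]
theorem weightedEval_apply (v w : ι → F) (q : F[X]) (i : ι) :
    weightedEval v w q i = v i * q.eval (w i) := rfl

theorem sum_weightedEval_mul_weightedEval [Fintype ι] (v w : ι → F) (f g : F[X]) :
    ∑ i, weightedEval v w f i * weightedEval v w g i =
      (∑ i, v i ^ 2 • leval (w i)) (f * g) := by
  simp only [weightedEval_apply, LinearMap.sum_apply, LinearMap.smul_apply,
    leval_apply, eval_mul, smul_eq_mul]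
  exact sum_congr rfl fun i _ => by ring

theorem TGRSCode_eq_range {n k : ℕ} (α v : Fin n → F) (η : F) :
    TGRSCode F n k α v η = LinearMap.range (weightedEval v α ∘ₗ twistedPoly k η) := by
  ext c
  simp [TGRSCode, funext_iff, eval_twistedPoly, eq_comm]

theorem le_finrank_range_weightedEval_twistedPoly [Fintype ι] {k : ℕ} {v w : ι → F}
    (hv : ∀ i, v i ≠ 0) (hw : Function.Injective w) (hk : k < Fintype.card ι) (η : F) :
    k ≤ finrank F (LinearMap.range (weightedEval v w ∘ₗ twistedPoly k η)) := by
  set E := Function.ExtendByZero.linearMap F (Fin.val : Fin k → ℕ)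
  have hinj : Function.Injective ((weightedEval v w ∘ₗ twistedPoly k η) ∘ₗ E) := by
    rw [← LinearMap.ker_eq_bot, LinearMap.ker_eq_bot']
    intro b hb
    have hzero : twistedPoly k η (E b) = 0 := by
      refine eq_zero_of_natDegree_lt_card_of_eval_eq_zero _ hw (fun i => ?_)
        ((natDegree_twistedPoly_le k η _).trans_lt hk)
      simpa [hv i] using congrFun hb i
    funext j
    simpa [coeff_twistedPoly_of_lt j.isLt, E, Fin.val_injective.extend_apply] using
      congrArg (coeff · j) hzero
  calc k = finrank F (LinearMap.range ((weightedEval v w ∘ₗ twistedPoly k η) ∘ₗ E)) := by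
        rw [LinearMap.finrank_range_of_inj hinj, finrank_fin_fun]
    _ ≤ _ := Submodule.finrank_mono (LinearMap.range_comp_le_range _ _)

theorem degree_mul_lt_of_degree_lt_of_natDegree_le {A P : F[X]} {m n : ℕ} (hA : A.degree < m)
    (hP : P.natDegree ≤ n) : (A * P).degree < ↑(m + n) := by
  rcases eq_or_ne A 0 with rfl | hA0
  · simp
  have hAm : A.natDegree < m := (natDegree_lt_iff_degree_lt hA0).2 hA
  calc (A * P).degree ≤ ↑(A.natDegree + P.natDegree) :=
        degree_le_natDegree.trans (by exact_mod_cast natDegree_mul_le)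
    _ < ↑(m + n) := by exact_mod_cast (by omega : A.natDegree + P.natDegree < m + n)

theorem map_twistedPoly_mul_twistedPoly {L : F[X] →ₗ[F] F} {k : ℕ} (hk : 1 ≤ k)
    (hL : ∀ h : F[X], h.degree < ↑(2 * k) → L h = h.coeff (2 * k - 1))
    (η : F) (a b : ℕ → F) :
    L (twistedPoly k η a * twistedPoly k η b) =
      a (k - 1) * b (k - 1) * η * (2 + η * L (X ^ (2 * k))) := by
  obtain ⟨m, rfl⟩ := Nat.exists_eq_add_of_le' hk
  rw [show 2 * (m + 1) - 1 = 2 * m + 1 by omega] at hL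
  simp only [Nat.add_sub_cancel]
  have hvanish : ∀ h : F[X], h.degree < ↑(2 * m + 1) → L h = 0 := fun h hh => by
    rw [hL h (hh.trans (by exact_mod_cast (by omega))), coeff_eq_zero_of_degree_lt hh]
  have hvanish_mul : ∀ A P : F[X], A.degree < m → P.natDegree ≤ m + 1 → L (A * P) = 0 :=
    fun A P hA hP => hvanish _ <| by
      simpa [← add_assoc, ← two_mul] using degree_mul_lt_of_degree_lt_of_natDegree_le hA hP
  have hmapC : ∀ (c : F) (h : F[X]), L (C c * h) = c * L h := fun c h => by
    rw [← smul_eq_C_mul, map_smul, smul_eq_mul]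
  set T : F[X] := X ^ m * (1 + C η * X) with hT
  have hTdeg : T.natDegree ≤ m + 1 := by
    rw [hT]; compute_degree
  have hlow : ∀ c : ℕ → F, (∑ j ∈ range m, C (c j) * X ^ j).degree < ↑m := fun c =>
    mem_degreeLT.1 (sum_mem fun j hj => mem_degreeLT.2
      ((degree_C_mul_X_pow_le j _).trans_lt (by exact_mod_cast mem_range.1 hj)))
  have hT2 : T ^ 2 =
      X ^ (2 * m) + C (2 * η) * X ^ (2 * m + 1) + C (η ^ 2) * X ^ (2 * (m + 1)) := by
    rw [hT]; simp only [map_mul, map_pow, map_ofNat]; ring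
  have hexpand : twistedPoly (m + 1) η a * twistedPoly (m + 1) η b =
      (∑ j ∈ range m, C (a j) * X ^ j) * twistedPoly (m + 1) η b +
        C (a m) * ((∑ j ∈ range m, C (b j) * X ^ j) * T) + C (a m * b m) * T ^ 2 := by
    rw [map_mul]
    linear_combination twistedPoly (m + 1) η b * twistedPoly_succ m η a +
      C (a m) * T * twistedPoly_succ m η b
  rw [hexpand, map_add, map_add, hmapC, hmapC, hT2, map_add, map_add, hmapC, hmapC,
    hvanish_mul _ _ (hlow a) (natDegree_twistedPoly_le _ _ _), hvanish_mul _ _ (hlow b) hTdeg,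
    hvanish _ (by rw [degree_X_pow]; exact_mod_cast (by omega)),
    hL _ (by rw [degree_X_pow]; exact_mod_cast (by omega)), coeff_X_pow_self]
  ring

theorem injective_of_eval_derivative_nodal_ne_zero [Fintype ι] [DecidableEq ι] {w : ι → F}
    (h : ∀ i, (derivative (Lagrange.nodal univ w)).eval (w i) ≠ 0) : Function.Injective w := by
  intro i j hij
  by_contra hne
  apply h i
  rw [Lagrange.eval_nodal_derivative_eval_node_eq (mem_univ i), Lagrange.eval_nodal]
  exact prod_eq_zero (mem_erase.2 ⟨Ne.symm hne, mem_univ j⟩) (by rw [hij, sub_self])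

theorem sum_nodalWeight_smul_leval_apply [Fintype ι] [DecidableEq ι] {w : ι → F}
    (hw : Function.Injective w) {h : F[X]} (hh : h.degree < Fintype.card ι) :
    (∑ i, Lagrange.nodalWeight univ w i • leval (w i)) h = h.coeff (Fintype.card ι - 1) := by
  rw [← card_univ, Lagrange.coeff_eq_sum hw.injOn hh]
  simp [Lagrange.nodalWeight, div_eq_mul_inv, prod_inv_distrib, mul_comm]

def pointPoly (R : Type*) [Field R] (p : ℕ) : R[X] :=
  X ^ (2 * p) - X ^ (2 * p - 1) + 2 * X ^ (p + 1) + C ((3 : R)⁻¹) * X ^ 3 + 1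

def quarticPoly (R : Type*) [Field R] : R[X] :=
  X ^ 4 - C ((3 : R) - (3 : R)⁻¹) * X ^ 3 + 1

theorem map_pointPoly {R S : Type*} [Field R] [Field S] (f : R →+* S) (p : ℕ) :
    (pointPoly R p).map f = pointPoly S p := by
  simp [pointPoly, map_ofNat]

theorem map_quarticPoly {R S : Type*} [Field R] [Field S] (f : R →+* S) :
    (quarticPoly R).map f = quarticPoly S := by
  simp [quarticPoly, map_ofNat]

theorem eval_pointPoly_of_pow_sub_one_add_eq_zero {p : ℕ} (hp : 1 ≤ p) {β : F}
    (hβ : β ^ (p - 1) + β = 0) : (pointPoly F p).eval β = (quarticPoly F).eval β := by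
  obtain ⟨q, rfl⟩ := Nat.exists_eq_add_of_le' hp
  have hq : β ^ q = -β := by simpa using eq_neg_of_add_eq_zero_left hβ
  have h2p : β ^ (2 * (q + 1)) = β ^ 4 := by
    rw [show 2 * (q + 1) = q + q + 2 by ring, pow_add, pow_add, hq]; ring
  have h2p1 : β ^ (2 * (q + 1) - 1) = β ^ 3 := by
    rw [show 2 * (q + 1) - 1 = q + q + 1 by omega, pow_add, pow_add, hq]; ring
  have hp1 : β ^ (q + 1 + 1) = -β ^ 3 := by
    rw [pow_add, pow_add, hq]; ring
  simp only [pointPoly, quarticPoly, eval_add, eval_sub, eval_mul, eval_pow, eval_X, eval_C,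
    eval_one, eval_ofNat, h2p, h2p1, hp1]
  ring

theorem derivative_pointPoly {p : ℕ} [CharP F p] (hp : 3 < p) :
    derivative (pointPoly F p) = (X ^ (p - 1) + X) ^ 2 := by
  have h3 : (3 : F) ≠ 0 := by
    exact_mod_cast (CharP.cast_eq_zero_iff F p 3).not.2 (Nat.not_dvd_of_pos_of_lt (by norm_num) hp)
  have hC3 : C (3 : F)⁻¹ * 3 = 1 := by
    rw [← map_ofNat C 3, ← C_mul, inv_mul_cancel₀ h3, C_1]
  have hp0 : (p : F[X]) = 0 := by
    rw [← map_natCast C, CharP.cast_eq_zero, map_zero]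
  obtain ⟨q, rfl⟩ : ∃ q, p = q + 2 := ⟨p - 2, by omega⟩
  rw [pointPoly, show 2 * (q + 2) - 1 = 2 * q + 3 by omega]
  simp only [derivative_sub, derivative_X_pow, derivative_mul, derivative_C,
    derivative_ofNat, derivative_one, map_add, map_mul, map_natCast, map_ofNat, map_one,
    Nat.cast_add, Nat.cast_mul, Nat.cast_ofNat, Nat.cast_one, Nat.add_sub_cancel] at hp0 ⊢
  rw [show 2 * (q + 2) - 1 = 2 * q + 3 by omega, show 2 * q + 3 - 1 = 2 * q + 2 by omega,
    show q + 2 - 1 = q + 1 by omega]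
  linear_combination
    (2 * X ^ (2 * q + 3) - 2 * X ^ (2 * q + 2) + 2 * X ^ (q + 2)) * hp0 + X ^ 2 * hC3

theorem pow_sub_one_add_ne_zero_of_isRoot {p : ℕ} [Fact p.Prime] [CharP F p] (hp : 3 < p)
    (hcop : IsCoprime (derivative (pointPoly (ZMod p) p)) (quarticPoly (ZMod p))) {β : F}
    (hβ : (pointPoly F p).IsRoot β) : β ^ (p - 1) + β ≠ 0 := by
  intro h
  have hcopF := hcop.map (mapRingHom (ZMod.castHom dvd_rfl F))
  rw [coe_mapRingHom, ← derivative_map, map_pointPoly, map_quarticPoly] at hcopF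
  have hderiv : (derivative (pointPoly F p)).eval β = 0 := by
    rw [derivative_pointPoly hp, eval_pow, eval_add, eval_pow, eval_X, h, zero_pow two_ne_zero]
  have hquartic : (quarticPoly F).eval β = 0 := by
    rw [← eval_pointPoly_of_pow_sub_one_add_eq_zero (by omega) h, hβ.eq_zero]
  simpa [hderiv, hquartic] using aeval_ne_zero_of_isCoprime hcopF β

theorem map_X_pow_two_mul_of_map_pointPoly {L : F[X] →ₗ[F] F} {p : ℕ} (hp : 3 ≤ p)
    (hL : ∀ h : F[X], h.degree < ↑(2 * p) → L h = h.coeff (2 * p - 1))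
    (hLm : L (pointPoly F p) = 0) : L (X ^ (2 * p)) = 1 := by
  have hdecomp : X ^ (2 * p) = pointPoly F p +
      (X ^ (2 * p - 1) - 2 * X ^ (p + 1) - C (3 : F)⁻¹ * X ^ 3 - 1) := by
    rw [pointPoly]; ring
  rw [hdecomp, map_add, hLm, zero_add, hL]
  · simp [coeff_X_pow, coeff_one, coeff_C_mul, show 2 * p ≠ p + 2 by omega,
      show 2 * p ≠ 4 by omega, show 2 * p - 1 ≠ 0 by omega]
  · refine (degree_le_of_natDegree_le (n := 2 * p - 1) ?_).trans_lt
      (by exact_mod_cast (by omega : 2 * p - 1 < 2 * p))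
    compute_degree
    all_goals omega

end

theorem tgrs_selfdual_construction_Fq2p_general (p : ℕ) (hp : p.Prime) (hp3 : 3 < p)
    (F : Type*) [Field F] [CharP F p]
    (α : Fin (2 * p) → F)
    (hsplit : (X ^ (2 * p) - X ^ (2 * p - 1) + 2 * X ^ (p + 1)
        + Polynomial.C ((3 : F)⁻¹) * X ^ 3 + 1 : F[X]) =
      ∏ i, (X - Polynomial.C (α i)))
    (hgcd : IsCoprime
      (derivative (X ^ (2 * p) - X ^ (2 * p - 1) + 2 * X ^ (p + 1)
        + Polynomial.C ((3 : ZMod p)⁻¹) * X ^ 3 + 1 : (ZMod p)[X]))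
      (X ^ 4 - Polynomial.C ((3 : ZMod p) - (3 : ZMod p)⁻¹) * X ^ 3 + 1
        : (ZMod p)[X])) :
    Function.Injective α ∧ (∀ i, α i ^ (p - 1) + α i ≠ 0) ∧
      IsSelfDual (TGRSCode F (2 * p) p α
        (fun i => (α i ^ (p - 1) + α i)⁻¹) (-2)) := by
  have := Fact.mk hp
  have hnodal : Lagrange.nodal univ α = pointPoly F p := hsplit.symm
  have hroot : ∀ i, (pointPoly F p).IsRoot (α i) := fun i => by
    rw [← hnodal]; exact Lagrange.eval_nodal_at_node (mem_univ i)
  have hne : ∀ i, α i ^ (p - 1) + α i ≠ 0 := fun i =>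
    pow_sub_one_add_ne_zero_of_isRoot hp3 hgcd (hroot i)
  have hderiv : ∀ i,
      (derivative (Lagrange.nodal univ α)).eval (α i) = (α i ^ (p - 1) + α i) ^ 2 := by
    simp [hnodal, derivative_pointPoly hp3]
  have hinj : Function.Injective α := injective_of_eval_derivative_nodal_ne_zero fun i => by
    rw [hderiv]; exact pow_ne_zero 2 (hne i)
  set v : Fin (2 * p) → F := fun i => (α i ^ (p - 1) + α i)⁻¹
  have hweight : ∀ i, Lagrange.nodalWeight univ α i = v i ^ 2 := fun i => by
    rw [Lagrange.nodalWeight_eq_eval_derivative_nodal (mem_univ i), hderiv, inv_pow]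
  set L := ∑ i, v i ^ 2 • leval (α i)
  have hL : ∀ h : F[X], h.degree < ↑(2 * p) → L h = h.coeff (2 * p - 1) := fun h hh => by
    simpa [L, hweight] using sum_nodalWeight_smul_leval_apply hinj (h := h) (by simpa using hh)
  have hLm : L (pointPoly F p) = 0 := by simp [L, (hroot _).eq_zero]
  have hLtop : L (X ^ (2 * p)) = 1 := map_X_pow_two_mul_of_map_pointPoly (by omega) hL hLm
  refine ⟨hinj, hne, ?_⟩
  rw [TGRSCode_eq_range]
  refine isSelfDual_of_forall_sum_mul_eq_zero _ ?_ ?_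
  · rintro _ ⟨a, rfl⟩ _ ⟨b, rfl⟩
    rw [LinearMap.comp_apply, LinearMap.comp_apply, sum_weightedEval_mul_weightedEval,
      map_twistedPoly_mul_twistedPoly (by omega) hL, hLtop]
    ring
  · exact Nat.mul_le_mul_left 2 (le_finrank_range_weightedEval_twistedPoly
      (fun i => inv_ne_zero (hne i)) hinj (by simp; omega) _)

/-- let `p > 3` be prime and `F` a finite field of characteristic `p`
over which `m(x) = x^{2p} - x^{2p-1} + 2x^{p+1} + 3⁻¹ x³ + 1` splits completely with
roots `α_1, …, α_{2p}`; assume `gcd(m'(x), x⁴ - (3 - 3⁻¹)x³ + 1) = 1` in `F_p[x]`.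
Then the roots are pairwise distinct, `α_i^{p-1} + α_i ≠ 0` for all `i`, and the
TGRS code `C_p(α, v, -2)` with `v_i = (α_i^{p-1} + α_i)⁻¹` is self-dual. -/
theorem tgrs_selfdual_construction_Fq2p (p : ℕ) (hp : p.Prime) (hp3 : 3 < p)
    (F : Type*) [Field F] [Fintype F] [CharP F p]
    (α : Fin (2 * p) → F)
    (hsplit : (X ^ (2 * p) - X ^ (2 * p - 1) + 2 * X ^ (p + 1)
        + Polynomial.C ((3 : F)⁻¹) * X ^ 3 + 1 : F[X]) =
      ∏ i, (X - Polynomial.C (α i)))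
    (hgcd : IsCoprime
      (derivative (X ^ (2 * p) - X ^ (2 * p - 1) + 2 * X ^ (p + 1)
        + Polynomial.C ((3 : ZMod p)⁻¹) * X ^ 3 + 1 : (ZMod p)[X]))
      (X ^ 4 - Polynomial.C ((3 : ZMod p) - (3 : ZMod p)⁻¹) * X ^ 3 + 1
        : (ZMod p)[X])) :
    Function.Injective α ∧ (∀ i, α i ^ (p - 1) + α i ≠ 0) ∧
      IsSelfDual (TGRSCode F (2 * p) p α
        (fun i => (α i ^ (p - 1) + α i)⁻¹) (-2)) :=
  tgrs_selfdual_construction_Fq2p_general p hp hp3 F α hsplit hgcd
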